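/- arXiv:2508.13411 — 4 statements merged into one kernel-verified Lean document; each statement's English description precedes it below -/
import Mathlib

section
/- Let a_1,...,a_T be a non-negative sequence with a_1 > 0, and let A_t = sum_{τ=1}^t a_τ. Then sum_{t=1}^T a_t / A_t ≤ log(1 + A_T / A_1) + 1. -/
open Finset

theorem accumulation_bound (T : ℕ) (hT : 1 ≤ T) (a : ℕ → ℝ)
    (ha : ∀ t, 0 ≤ a t) (ha1 : 0 < a 1)
    (A : ℕ → ℝ) (hA : ∀ t, A t = ∑ τ ∈ Finset.Icc 1 t, a τ) :
    ∑ t ∈ Finset.Icc 1 T, a t / A t ≤ Real.log (1 + A T / A 1) + 1 := by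
  have hApos : ∀ t, 1 ≤ t → 0 < A t := by
    intro t ht
    rw [hA t]
    have h1 : a 1 ≤ ∑ τ ∈ Finset.Icc 1 t, a τ :=
      Finset.single_le_sum (fun i _ => ha i) (by simp [ht])
    linarith
  have hstep : ∀ t, A (t + 1) = A t + a (t + 1) := by
    intro t
    rw [hA, hA, Finset.sum_Icc_succ_top (by omega)]
  have key : ∀ S, 1 ≤ S →
      ∑ t ∈ Finset.Icc 1 S, a t / A t ≤ Real.log (A S / A 1) + 1 := by
    intro S hS
    induction S with
    | zero => omega
    | succ n ih =>
      rcases Nat.eq_or_lt_of_le hS with h1 | h1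
      · have hn : n = 0 := by omega
        subst hn
        have hA1 : A 1 = a 1 := by rw [hA]; simp
        simp [hA1, div_self (ne_of_gt ha1), Real.log_one]
      · have hn : 1 ≤ n := by omega
        have hAn := hApos n hn
        have hAn1 := hApos (n + 1) (by omega)
        have hA1 := hApos 1 le_rfl
        rw [Finset.sum_Icc_succ_top (by omega)]
        have hlog : Real.log (A n / A (n + 1)) ≤ A n / A (n + 1) - 1 :=
          Real.log_le_sub_one_of_pos (by positivity)
        have hlogdiv : Real.log (A n / A (n + 1)) =
            Real.log (A n) - Real.log (A (n + 1)) := Real.log_div (ne_of_gt hAn) (ne_of_gt hAn1)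
        have hAe : a (n + 1) = A (n + 1) - A n := by rw [hstep n]; ring
        have hfrac : a (n + 1) / A (n + 1) ≤ Real.log (A (n + 1)) - Real.log (A n) := by
          rw [hAe, sub_div, div_self (ne_of_gt hAn1)]
          have : A n / A (n + 1) - 1 = -(1 - A n / A (n + 1)) := by ring
          nlinarith [hlog, hlogdiv]
        have hlogd : ∀ m, 1 ≤ m → Real.log (A m / A 1) =
            Real.log (A m) - Real.log (A 1) := fun m hm =>
          Real.log_div (ne_of_gt (hApos m hm)) (ne_of_gt hA1)
        rw [hlogd (n + 1) (by omega)]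
        have := ih hn
        rw [hlogd n hn] at this
        linarith
  have hmain := key T hT
  have hA1 := hApos 1 le_rfl
  have hAT := hApos T hT
  have hmono : Real.log (A T / A 1) ≤ Real.log (1 + A T / A 1) := by
    apply Real.log_le_log (by positivity)
    linarith
  linarith
end

section
/- Let W_t = λI + sum_{τ=1}^t x_τ x_τᵀ with λ > 0 and x_τ ∈ ℝ^d. Then log(det(W_T)/det(W_0)) ≤ sum_{t=1}^T x_tᵀ W_{t-1}^{-1} x_t. -/
open Matrix Finset

theorem log_det_growth (d T : ℕ) (lam : ℝ) (hlam : 0 < lam)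
    (x : ℕ → Fin d → ℝ) (W : ℕ → Matrix (Fin d) (Fin d) ℝ)
    (hW : ∀ t, W t = lam • (1 : Matrix (Fin d) (Fin d) ℝ) +
      ∑ τ ∈ Finset.Icc 1 t, Matrix.vecMulVec (x τ) (x τ)) :
    Real.log ((W T).det / (W 0).det) ≤
      ∑ t ∈ Finset.range T, x (t + 1) ⬝ᵥ ((W t)⁻¹ *ᵥ x (t + 1)) := by
  -- step relation
  have hstep : ∀ t, W (t + 1) = W t + vecMulVec (x (t+1)) (x (t+1)) := by
    intro t
    rw [hW, hW, Finset.sum_Icc_succ_top (by omega), add_assoc]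
  -- positive definiteness
  have hpsd : ∀ t, (vecMulVec (x t) (x t)).PosSemidef := by
    intro t
    have : vecMulVec (x t) (x t) = replicateCol Unit (x t) * (replicateCol Unit (x t))ᴴ := by
      ext i j; simp [vecMulVec, mul_apply, conjTranspose_apply]
    rw [this]
    exact posSemidef_self_mul_conjTranspose _
  have hpd : ∀ t, (W t).PosDef := by
    intro t
    induction t with
    | zero =>
      rw [hW]
      simp only [show Finset.Icc 1 0 = (∅ : Finset ℕ) by decide, Finset.sum_empty, add_zero,
        smul_one_eq_diagonal]
      exact posDef_diagonal_iff.mpr fun _ => hlam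
    | succ n ih =>
      rw [hstep]
      exact ih.add_posSemidef (hpsd _)
  have hdet : ∀ t, 0 < (W t).det := fun t => (hpd t).det_pos
  have key : ∀ t, Real.log ((W (t+1)).det) - Real.log ((W t).det)
      ≤ x (t+1) ⬝ᵥ ((W t)⁻¹ *ᵥ x (t+1)) := by
    intro t
    set q := x (t+1) ⬝ᵥ ((W t)⁻¹ *ᵥ x (t+1)) with hq
    have hq0 : 0 ≤ q := by
      have := ((hpd t).inv).posSemidef.re_dotProduct_nonneg (x (t+1))
      simpa using this
    have hdetstep : (W (t+1)).det = (W t).det * (1 + q) := by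
      rw [hstep, vecMulVec_eq Unit, det_add_replicateCol_mul_replicateRow (hpd t).det_pos.ne'.isUnit]
      congr 1
      rw [det_unique]
      simp [hq, mul_apply, dotProduct, mulVec, Finset.mul_sum, Matrix.one_apply]
      simp only [Finset.sum_mul, mul_assoc]
      rw [Finset.sum_comm]
    rw [hdetstep, Real.log_mul (hdet t).ne' (by positivity), add_sub_cancel_left]
    have := Real.log_le_sub_one_of_pos (show (0:ℝ) < 1+q by linarith)
    linarith
  calc Real.log ((W T).det / (W 0).det)
      = Real.log ((W T).det) - Real.log ((W 0).det) :=
        Real.log_div (hdet T).ne' (hdet 0).ne'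
    _ = ∑ t ∈ Finset.range T, (Real.log ((W (t+1)).det) - Real.log ((W t).det)) := by
        rw [Finset.sum_range_sub (fun t => Real.log ((W t).det))]
    _ ≤ _ := Finset.sum_le_sum fun t _ => key t
end

section
/- Let W_t = λI + sum_{τ=1}^t x_τ x_τᵀ with λ > 0 and ‖x_τ‖₂ ≤ L for all τ. Then sum_{t=1}^T min{1, x_tᵀ W_{t-1}^{-1} x_t} ≤ 2 log(det(W_T)/det(W_0)) ≤ 2d log(1 + T L² / (dλ)). -/
open Matrix Finset

lemma min_le_two_log {q : ℝ} (hq : 0 ≤ q) : min 1 q ≤ 2 * Real.log (1 + q) := by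
  have h1q : (0:ℝ) < 1 + q := by linarith
  rcases le_total q 1 with h | h
  · rw [min_eq_right h]
    have hexp : Real.exp (q/2) ≤ 1 + q := by
      have h2 : 1 - q/2 ≤ Real.exp (-(q/2)) := by
        have := Real.add_one_le_exp (-(q/2)); linarith
      have h3 : (0:ℝ) < 1 - q/2 := by linarith
      have h4 : Real.exp (q/2) * (1 - q/2) ≤ 1 := by
        calc Real.exp (q/2) * (1 - q/2) ≤ Real.exp (q/2) * Real.exp (-(q/2)) := by
              exact mul_le_mul_of_nonneg_left h2 (Real.exp_pos _).le
          _ = 1 := by rw [← Real.exp_add]; simp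
      have h5 : Real.exp (q/2) ≤ 1/(1 - q/2) := by
        rw [le_div_iff₀ h3]; exact h4
      have h6 : 1/(1 - q/2) ≤ 1 + q := by
        rw [div_le_iff₀ h3]; nlinarith
      exact h5.trans h6
    have : q/2 ≤ Real.log (1+q) := (Real.le_log_iff_exp_le h1q).mpr hexp
    linarith
  · rw [min_eq_left h]
    have h2 : Real.log 2 ≤ Real.log (1+q) := by
      apply Real.log_le_log (by norm_num); linarith
    have := Real.log_two_gt_d9
    linarith

lemma det_le_pow_trace_aux {d : ℕ} (hd : 0 < d) {A : Matrix (Fin d) (Fin d) ℝ}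
    (hA : A.PosSemidef) : A.det ≤ (A.trace / d) ^ d := by
  have hH := hA.isHermitian
  have hznn : ∀ i, 0 ≤ hH.eigenvalues i := hA.eigenvalues_nonneg
  have hdet : A.det = ∏ i, hH.eigenvalues i := by
    simpa using hH.det_eq_prod_eigenvalues
  have htr : A.trace = ∑ i, hH.eigenvalues i := by
    rw [hH.trace_eq_sum_eigenvalues]
    simp
  have hdne : ((d:ℝ)) ≠ 0 := by positivity
  have hw : ∑ _i : Fin d, (d:ℝ)⁻¹ = 1 := by
    rw [Finset.sum_const, Finset.card_univ, Fintype.card_fin, nsmul_eq_mul]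
    exact mul_inv_cancel₀ hdne
  have hgm := Real.geom_mean_le_arith_mean_weighted Finset.univ (fun _ => (d:ℝ)⁻¹)
    hH.eigenvalues (fun _ _ => by positivity) hw (fun i _ => hznn i)
  have hprod : ∏ i, hH.eigenvalues i ^ ((d:ℝ)⁻¹) = (∏ i, hH.eigenvalues i) ^ ((d:ℝ)⁻¹) :=
    Real.finset_prod_rpow _ _ (fun i _ => hznn i) _
  have hsum : ∑ i : Fin d, (d:ℝ)⁻¹ * hH.eigenvalues i = (∑ i, hH.eigenvalues i) / d := by
    rw [← Finset.mul_sum]; ring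
  rw [hprod, hsum] at hgm
  have hP : 0 ≤ ∏ i, hH.eigenvalues i := Finset.prod_nonneg fun i _ => hznn i
  have key : ∏ i, hH.eigenvalues i ≤ ((∑ i, hH.eigenvalues i) / d) ^ d := by
    calc ∏ i, hH.eigenvalues i
        = ((∏ i, hH.eigenvalues i) ^ ((d:ℝ)⁻¹)) ^ (d:ℕ) := by
          rw [← Real.rpow_natCast ((∏ i, hH.eigenvalues i) ^ ((d:ℝ)⁻¹)) d,
            ← Real.rpow_mul hP, inv_mul_cancel₀ hdne, Real.rpow_one]
      _ ≤ ((∑ i, hH.eigenvalues i) / d) ^ d :=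
          pow_le_pow_left₀ (Real.rpow_nonneg hP _) hgm d
  rw [hdet, htr]; exact key

theorem elliptical_potential (d T : ℕ) (hd : 0 < d) (L lam : ℝ) (hlam : 0 < lam)
    (x : ℕ → EuclideanSpace ℝ (Fin d)) (hx : ∀ τ, ‖x τ‖ ≤ L)
    (W : ℕ → Matrix (Fin d) (Fin d) ℝ)
    (hW : ∀ t, W t = lam • (1 : Matrix (Fin d) (Fin d) ℝ) +
      ∑ τ ∈ Finset.Icc 1 t, Matrix.vecMulVec (x τ) (x τ)) :
    ∑ t ∈ Finset.range T, min 1 (x (t + 1) ⬝ᵥ ((W t)⁻¹ *ᵥ x (t + 1))) ≤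
      2 * Real.log ((W T).det / (W 0).det) ∧
    2 * Real.log ((W T).det / (W 0).det) ≤ 2 * d * Real.log (1 + T * L ^ 2 / (d * lam)) := by
  have hdR : (0:ℝ) < d := by exact_mod_cast hd
  have hL0 : 0 ≤ L := le_trans (norm_nonneg (x 0)) (hx 0)
  -- partial sums of rank-one matrices are positive semidefinite
  have hone : ∀ τ, (Matrix.vecMulVec (x τ) (x τ) : Matrix (Fin d) (Fin d) ℝ).PosSemidef := by
    intro τ
    have hH : (Matrix.vecMulVec (x τ) (x τ))ᴴ = Matrix.vecMulVec (x τ) (x τ) := by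
      ext i j
      simp [Matrix.conjTranspose_apply, Matrix.vecMulVec_apply, mul_comm]
    refine .of_dotProduct_mulVec_nonneg hH (fun y => ?_)
    have key : star y ⬝ᵥ (Matrix.vecMulVec (x τ) (x τ) *ᵥ y) = ((x τ) ⬝ᵥ y) * ((x τ) ⬝ᵥ y) := by
      simp only [dotProduct, Matrix.mulVec, Matrix.vecMulVec_apply,
        Pi.star_apply, star_trivial]
      rw [Finset.sum_mul_sum]
      simp_rw [Finset.mul_sum]
      exact Finset.sum_congr rfl fun i _ => Finset.sum_congr rfl fun j _ => by ring
    rw [key]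
    exact mul_self_nonneg _
  have hPSD : ∀ s : Finset ℕ,
      (∑ τ ∈ s, Matrix.vecMulVec (x τ) (x τ)).PosSemidef := by
    intro s
    induction s using Finset.cons_induction with
    | empty => simpa using (Matrix.PosSemidef.zero : (0 : Matrix (Fin d) (Fin d) ℝ).PosSemidef)
    | cons a s ha ih =>
      rw [Finset.sum_cons]
      exact (hone a).add ih
  -- each W t is positive definite
  have hpos : ∀ t, (W t).PosDef := by
    intro t
    rw [hW t]
    refine Matrix.PosDef.add_posSemidef ?_ (hPSD _)
    refine .of_dotProduct_mulVec_pos ?_ ?_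
    · rw [Matrix.IsHermitian, conjTranspose_smul]
      simp
    · intro y hy
      rw [Matrix.smul_mulVec, Matrix.one_mulVec, dotProduct_smul, smul_eq_mul]
      exact mul_pos hlam (Matrix.dotProduct_star_self_pos_iff.mpr hy)
  have hq : ∀ t, (0:ℝ) ≤ (x (t+1)) ⬝ᵥ ((W t)⁻¹ *ᵥ x (t+1)) := by
    intro t
    have h := ((hpos t).inv).posSemidef.dotProduct_mulVec_nonneg (x (t+1))
    simpa using h
  -- determinant recurrence
  have hstep : ∀ t, (W (t+1)).det =
      (W t).det * (1 + (x (t+1)) ⬝ᵥ ((W t)⁻¹ *ᵥ x (t+1))) := by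
    intro t
    have hWt : W (t+1) = W t + replicateCol Unit (x (t+1)) * replicateRow Unit (x (t+1)) := by
      rw [hW (t+1), hW t, Finset.sum_Icc_succ_top (Nat.succ_le_succ (Nat.zero_le t)),
        ← Matrix.vecMulVec_eq, add_assoc]
    have hU : IsUnit (W t).det := isUnit_iff_ne_zero.mpr (hpos t).det_pos.ne'
    rw [hWt, Matrix.det_add_replicateCol_mul_replicateRow hU]
    congr 1
    rw [Matrix.det_unique, Matrix.mul_assoc]
    have hcol : (W t)⁻¹ * replicateCol Unit (x (t+1)) = replicateCol Unit ((W t)⁻¹ *ᵥ x (t+1)) := by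
      ext i j
      simp [Matrix.mul_apply, Matrix.replicateCol_apply, Matrix.mulVec, dotProduct]
    rw [hcol, Matrix.add_apply, Matrix.one_apply_eq, Matrix.replicateRow_mul_replicateCol_apply]
  -- product formula
  have hdetT : ∀ T', (W T').det =
      (W 0).det * ∏ t ∈ Finset.range T', (1 + (x (t+1)) ⬝ᵥ ((W t)⁻¹ *ᵥ x (t+1))) := by
    intro T'
    induction T' with
    | zero => simp
    | succ n ih => rw [hstep n, ih, Finset.prod_range_succ]; ring
  have hW0pos := (hpos 0).det_pos
  have hWTpos := (hpos T).det_pos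
  have hratio : (W T).det / (W 0).det =
      ∏ t ∈ Finset.range T, (1 + (x (t+1)) ⬝ᵥ ((W t)⁻¹ *ᵥ x (t+1))) := by
    rw [hdetT T, mul_comm, mul_div_assoc, div_self hW0pos.ne', mul_one]
  have hlogsum : Real.log ((W T).det / (W 0).det) =
      ∑ t ∈ Finset.range T, Real.log (1 + (x (t+1)) ⬝ᵥ ((W t)⁻¹ *ᵥ x (t+1))) := by
    rw [hratio, Real.log_prod (fun t _ => by have := hq t; positivity)]
  constructor
  · rw [hlogsum, Finset.mul_sum]
    exact Finset.sum_le_sum fun t _ => min_le_two_log (hq t)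
  · -- trace computation
    have hterm : ∀ τ, (Matrix.vecMulVec (x τ) (x τ)).trace = ∑ i, (x τ i)^2 := by
      intro τ
      simp [Matrix.trace, Matrix.diag, Matrix.vecMulVec_apply, sq]
    have htermle : ∀ τ, (Matrix.vecMulVec (x τ) (x τ)).trace ≤ L^2 := by
      intro τ
      rw [hterm τ]
      have h2 : ∑ i, (x τ i)^2 = ‖x τ‖^2 := by
        rw [EuclideanSpace.norm_eq, Real.sq_sqrt (by positivity)]
        simp [Real.norm_eq_abs, sq_abs]
      rw [h2]
      exact pow_le_pow_left₀ (norm_nonneg _) (hx τ) 2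
    have htermnn : ∀ τ, 0 ≤ (Matrix.vecMulVec (x τ) (x τ)).trace := by
      intro τ; rw [hterm τ]; positivity
    have htrEq : (W T).trace = lam * d +
        ∑ τ ∈ Finset.Icc 1 T, (Matrix.vecMulVec (x τ) (x τ)).trace := by
      rw [hW T, Matrix.trace_add, Matrix.trace_smul, Matrix.trace_sum, Matrix.trace_one]
      simp [Fintype.card_fin]
    have htrle : (W T).trace ≤ lam * d + T * L^2 := by
      rw [htrEq]
      have : ∑ τ ∈ Finset.Icc 1 T, (Matrix.vecMulVec (x τ) (x τ)).trace ≤ T * L^2 := by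
        calc ∑ τ ∈ Finset.Icc 1 T, (Matrix.vecMulVec (x τ) (x τ)).trace
            ≤ ∑ _τ ∈ Finset.Icc 1 T, L^2 := Finset.sum_le_sum fun τ _ => htermle τ
          _ = T * L^2 := by rw [Finset.sum_const, Nat.card_Icc]; simp
      linarith
    have htrnn : 0 ≤ (W T).trace := by
      rw [htrEq]
      have := Finset.sum_nonneg fun τ (_ : τ ∈ Finset.Icc 1 T) => htermnn τ
      nlinarith
    have hdetle : (W T).det ≤ (lam + T * L^2 / d)^d := by
      have h1 := det_le_pow_trace_aux hd (hpos T).posSemidef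
      have h2 : (W T).trace / d ≤ lam + T * L^2/d := by
        rw [div_le_iff₀ hdR]
        have heq : (lam + T*L^2/d)*d = lam*d + T*L^2 := by
          rw [add_mul, div_mul_cancel₀ _ hdR.ne']
        rw [heq]; exact htrle
      have h0 : 0 ≤ (W T).trace / d := div_nonneg htrnn hdR.le
      exact h1.trans (pow_le_pow_left₀ h0 h2 d)
    have hdet0 : (W 0).det = lam^d := by
      rw [hW 0]
      simp only [show Finset.Icc 1 0 = (∅ : Finset ℕ) from rfl, Finset.sum_empty, add_zero]
      rw [Matrix.det_smul, Matrix.det_one, Fintype.card_fin, mul_one]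
    have hbase : (0:ℝ) < 1 + T*L^2/(d*lam) := by positivity
    have hratio2 : (W T).det / (W 0).det ≤ (1 + T*L^2/(d*lam))^d := by
      rw [hdet0, div_le_iff₀ (by positivity)]
      have heq : (1 + T*L^2/(d*lam))^d * lam^d = (lam + T*L^2/d)^d := by
        rw [← mul_pow]
        congr 1
        field_simp
      rw [heq]; exact hdetle
    have hlogle : Real.log ((W T).det / (W 0).det) ≤ d * Real.log (1 + T*L^2/(d*lam)) := by
      calc Real.log ((W T).det / (W 0).det)
          ≤ Real.log ((1 + T*L^2/(d*lam))^d) :=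
            Real.log_le_log (div_pos hWTpos hW0pos) hratio2
        _ = d * Real.log (1 + T*L^2/(d*lam)) := by rw [Real.log_pow]
    linarith
end

section
/- Let W_t = λI + sum_{τ=1}^t x_τ x_τᵀ with λ ≥ max(1, L²) and ‖x_τ‖₂ ≤ L. Then for every t, x_tᵀ W_{t-1}^{-1} x_t ≤ L²/λ ≤ 1, and hence sum_{t=1}^T x_tᵀ W_{t-1}^{-1} x_t ≤ 2d log(1 + T L²/(dλ)). -/
open Matrix Finset

lemma aux_le_two_log {u : ℝ} (h0 : 0 ≤ u) (h1 : u ≤ 1) : u ≤ 2 * Real.log (1 + u) := by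
  have hpos : (0:ℝ) < 1 + u := by linarith
  have h2 : (0:ℝ) < 1 - u/2 := by linarith
  have key : Real.exp (u/2) ≤ 1 + u := by
    have h3 : 1 - u/2 ≤ Real.exp (-(u/2)) := by
      have := Real.add_one_le_exp (-(u/2)); linarith
    have h4 : Real.exp (u/2) * (1 - u/2) ≤ 1 := by
      calc Real.exp (u/2) * (1 - u/2) ≤ Real.exp (u/2) * Real.exp (-(u/2)) := by
            exact mul_le_mul_of_nonneg_left h3 (Real.exp_pos _).le
        _ = 1 := by rw [← Real.exp_add]; simp
    nlinarith [Real.exp_pos (u/2)]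
  have := (Real.le_log_iff_exp_le hpos).2 key
  linarith


variable {d : ℕ}

lemma aux_vecMulVec_psd (a : Fin d → ℝ) : (Matrix.vecMulVec a a).PosSemidef := by
  have : Matrix.vecMulVec a a = (Matrix.replicateRow Unit a)ᴴ * Matrix.replicateRow Unit a := by
    rw [Matrix.conjTranspose_replicateRow]
    simp [Matrix.vecMulVec_eq Unit a a]
  rw [this]
  exact Matrix.posSemidef_conjTranspose_mul_self _

lemma aux_posdef {lam : ℝ} (hlam : 0 < lam) (S : Matrix (Fin d) (Fin d) ℝ) (hS : S.PosSemidef) :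
    (lam • (1 : Matrix (Fin d) (Fin d) ℝ) + S).PosDef := by
  have h1 : (lam • (1 : Matrix (Fin d) (Fin d) ℝ)).PosDef := by
    rw [Matrix.smul_one_eq_diagonal]
    exact Matrix.posDef_diagonal_iff.2 fun _ => hlam
  exact h1.add_posSemidef hS

-- quadratic lower bound: lam * (v ⬝ᵥ v) ≤ v ⬝ᵥ ((lam•1 + S) *ᵥ v)
lemma aux_quad_lower {lam : ℝ} (S : Matrix (Fin d) (Fin d) ℝ) (hS : S.PosSemidef)
    (v : Fin d → ℝ) : lam * (v ⬝ᵥ v) ≤ v ⬝ᵥ ((lam • (1 : Matrix (Fin d) (Fin d) ℝ) + S) *ᵥ v) := by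
  have h0 : (0:ℝ) ≤ v ⬝ᵥ (S *ᵥ v) := by
    have := hS.re_dotProduct_nonneg v
    simpa using this
  have : v ⬝ᵥ ((lam • (1 : Matrix (Fin d) (Fin d) ℝ) + S) *ᵥ v)
      = lam * (v ⬝ᵥ v) + v ⬝ᵥ (S *ᵥ v) := by
    rw [Matrix.add_mulVec, dotProduct_add, Matrix.smul_mulVec, Matrix.one_mulVec,
      dotProduct_smul]
    simp [smul_eq_mul]
  rw [this]; linarith

lemma aux_step {lam : ℝ} (hlam : 0 < lam) (S : Matrix (Fin d) (Fin d) ℝ) (hS : S.PosSemidef)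
    (a : Fin d → ℝ) :
    0 ≤ a ⬝ᵥ ((lam • (1 : Matrix (Fin d) (Fin d) ℝ) + S)⁻¹ *ᵥ a) ∧
    a ⬝ᵥ ((lam • (1 : Matrix (Fin d) (Fin d) ℝ) + S)⁻¹ *ᵥ a) ≤ (a ⬝ᵥ a) / lam := by
  set Wm := lam • (1 : Matrix (Fin d) (Fin d) ℝ) + S with hWm
  have hpd : Wm.PosDef := aux_posdef hlam S hS
  have hinv : Wm⁻¹.PosSemidef := hpd.inv.posSemidef
  set y := Wm⁻¹ *ᵥ a with hy
  have hq0 : 0 ≤ a ⬝ᵥ y := by simpa using hinv.re_dotProduct_nonneg a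
  refine ⟨hq0, ?_⟩
  have hWy : Wm *ᵥ y = a := by
    rw [hy, Matrix.mulVec_mulVec, Matrix.mul_nonsing_inv _ hpd.det_pos.ne'.isUnit,
      Matrix.one_mulVec]
  have hlow : lam * (y ⬝ᵥ y) ≤ y ⬝ᵥ a := by
    have := aux_quad_lower (lam := lam) S hS y
    rwa [hWy] at this
  have hcs : (a ⬝ᵥ y) ^ 2 ≤ (a ⬝ᵥ a) * (y ⬝ᵥ y) := by
    simpa [dotProduct, pow_two] using
      Finset.sum_mul_sq_le_sq_mul_sq Finset.univ a y
  have hyy : 0 ≤ y ⬝ᵥ y := Finset.sum_nonneg fun i _ => mul_self_nonneg _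
  have haa : 0 ≤ a ⬝ᵥ a := Finset.sum_nonneg fun i _ => mul_self_nonneg _
  have hcomm : y ⬝ᵥ a = a ⬝ᵥ y := dotProduct_comm y a
  rw [hcomm] at hlow
  rcases eq_or_lt_of_le hq0 with h | h
  · rw [← h]; exact div_nonneg haa hlam.le
  · rw [le_div_iff₀ hlam]
    nlinarith [hcs, hlow, h, hlam, haa, hyy]

lemma aux_det_lemma {Wm : Matrix (Fin d) (Fin d) ℝ} (hpd : Wm.PosDef) (a : Fin d → ℝ) :
    (Wm + Matrix.vecMulVec a a).det = Wm.det * (1 + a ⬝ᵥ (Wm⁻¹ *ᵥ a)) := by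
  have hU : IsUnit Wm.det := hpd.det_pos.ne'.isUnit
  rw [Matrix.vecMulVec_eq Unit a a, Matrix.det_add_replicateCol_mul_replicateRow hU a a]
  congr 1
  rw [Matrix.det_unique]
  simp only [Matrix.add_apply, Matrix.one_apply_eq, Matrix.mul_apply, Matrix.replicateRow_apply,
    Matrix.replicateCol_apply, dotProduct, Matrix.mulVec, dotProduct]
  congr 1
  simp only [Finset.sum_mul, Finset.mul_sum]
  rw [Finset.sum_comm]
  exact Finset.sum_congr rfl fun i _ => Finset.sum_congr rfl fun j _ => by ring

lemma aux_trace_eq_sum_eig {A : Matrix (Fin d) (Fin d) ℝ} (hA : A.IsHermitian) :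
    A.trace = ∑ i, hA.eigenvalues i := by
  nth_rewrite 1 [hA.spectral_theorem]
  rw [Unitary.conjStarAlgAut_apply, Matrix.trace_mul_cycle]
  have h1 : (star (Matrix.IsHermitian.eigenvectorUnitary hA : Matrix (Fin d) (Fin d) ℝ)) *
      (Matrix.IsHermitian.eigenvectorUnitary hA : Matrix (Fin d) (Fin d) ℝ) = 1 :=
    Unitary.coe_star_mul_self _
  rw [h1, Matrix.one_mul, Matrix.trace_diagonal]
  simp

lemma aux_det_le_trace_pow (hd : 0 < d) {A : Matrix (Fin d) (Fin d) ℝ} (hA : A.PosSemidef) :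
    A.det ≤ (A.trace / d) ^ d := by
  have hH := hA.isHermitian
  have heig := hA.eigenvalues_nonneg
  rw [hH.det_eq_prod_eigenvalues, aux_trace_eq_sum_eig hH]
  simp only [RCLike.ofReal_real_eq_id, id_eq]
  have hdR : (0:ℝ) < d := Nat.cast_pos.2 hd
  have hgm := Real.geom_mean_le_arith_mean_weighted Finset.univ (fun _ => 1 / d)
    (fun i => hH.eigenvalues i) (fun i _ => by positivity)
    (by simp [Finset.card_univ]; field_simp) (fun i _ => heig i)
  -- hgm : ∏ i, (eig i) ^ (1/d : ℝ) ≤ ∑ i, (1/d) * eig i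
  have hprod : (∏ i, hH.eigenvalues i) = (∏ i, (hH.eigenvalues i) ^ ((1:ℝ)/d)) ^ (d:ℕ) := by
    rw [← Finset.prod_pow]
    refine Finset.prod_congr rfl fun i _ => ?_
    rw [← Real.rpow_natCast ((hH.eigenvalues i) ^ ((1:ℝ)/d)) d, ← Real.rpow_mul (heig i)]
    field_simp
    simp
  rw [hprod]
  have hsum : (∑ i, (1/(d:ℝ)) * hH.eigenvalues i) = (∑ i, hH.eigenvalues i) / d := by
    rw [Finset.sum_div]
    exact Finset.sum_congr rfl fun i _ => by ring
  calc (∏ i, (hH.eigenvalues i) ^ ((1:ℝ)/d)) ^ (d:ℕ)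
      ≤ (∑ i, (1/(d:ℝ)) * hH.eigenvalues i) ^ (d:ℕ) := by
        apply pow_le_pow_left₀ (Finset.prod_nonneg fun i _ => Real.rpow_nonneg (heig i) _) hgm
    _ = ((∑ i, hH.eigenvalues i) / d) ^ (d:ℕ) := by rw [hsum]

lemma aux_sum_psd (x : ℕ → Fin d → ℝ) (t : ℕ) :
    (∑ τ ∈ Finset.Icc 1 t, Matrix.vecMulVec (x τ) (x τ)).PosSemidef := by
  classical
  refine Finset.sum_induction _ _ (fun a b ha hb => ha.add hb) Matrix.PosSemidef.zero
    fun τ _ => aux_vecMulVec_psd (x τ)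

lemma aux_trace_vecMulVec (a : Fin d → ℝ) : (Matrix.vecMulVec a a).trace = a ⬝ᵥ a := by
  simp [Matrix.trace, Matrix.diag, Matrix.vecMulVec_apply, dotProduct]

theorem elliptical_potential_large_lambda (d T : ℕ) (hd : 0 < d) (L lam : ℝ)
    (hlam : max 1 (L ^ 2) ≤ lam)
    (x : ℕ → EuclideanSpace ℝ (Fin d)) (hx : ∀ τ, ‖x τ‖ ≤ L)
    (W : ℕ → Matrix (Fin d) (Fin d) ℝ)
    (hW : ∀ t, W t = lam • (1 : Matrix (Fin d) (Fin d) ℝ) +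
      ∑ τ ∈ Finset.Icc 1 t, Matrix.vecMulVec (x τ) (x τ)) :
    (∀ t, x (t + 1) ⬝ᵥ ((W t)⁻¹ *ᵥ x (t + 1)) ≤ L ^ 2 / lam ∧ L ^ 2 / lam ≤ 1) ∧
    ∑ t ∈ Finset.range T, x (t + 1) ⬝ᵥ ((W t)⁻¹ *ᵥ x (t + 1)) ≤
      2 * d * Real.log (1 + T * L ^ 2 / (d * lam)) := by
  have hlam1 : (1:ℝ) ≤ lam := le_trans (le_max_left _ _) hlam
  have hlamL : L ^ 2 ≤ lam := le_trans (le_max_right _ _) hlam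
  have hlam0 : (0:ℝ) < lam := lt_of_lt_of_le one_pos hlam1
  have hL0 : (0:ℝ) ≤ L := le_trans (norm_nonneg (x 0)) (hx 0)
  have hdR : (0:ℝ) < d := Nat.cast_pos.2 hd
  -- dot products bounded by L^2
  have hdot : ∀ τ, (x τ : Fin d → ℝ) ⬝ᵥ (x τ : Fin d → ℝ) ≤ L ^ 2 := by
    intro τ
    have hnorm : ‖x τ‖ ^ 2 = (x τ : Fin d → ℝ) ⬝ᵥ (x τ : Fin d → ℝ) := by
      rw [EuclideanSpace.norm_eq, Real.sq_sqrt (Finset.sum_nonneg fun i _ => by positivity)]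
      simp [dotProduct, Real.norm_eq_abs, sq_abs, pow_two]
    rw [← hnorm]
    exact pow_le_pow_left₀ (norm_nonneg _) (hx τ) 2
  have hS : ∀ t, (∑ τ ∈ Finset.Icc 1 t, Matrix.vecMulVec (x τ : Fin d → ℝ) (x τ)).PosSemidef :=
    fun t => aux_sum_psd _ t
  have hpd : ∀ t, (W t).PosDef := fun t => by rw [hW t]; exact aux_posdef hlam0 _ (hS t)
  -- the quantity
  set q : ℕ → ℝ := fun t => x (t + 1) ⬝ᵥ ((W t)⁻¹ *ᵥ x (t + 1)) with hq
  have hstep : ∀ t, 0 ≤ q t ∧ q t ≤ L ^ 2 / lam := by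
    intro t
    have := aux_step hlam0 _ (hS t) (x (t+1) : Fin d → ℝ)
    rw [← hW t] at this
    refine ⟨this.1, le_trans this.2 ?_⟩
    gcongr
    exact hdot _
  have hL2lam : L ^ 2 / lam ≤ 1 := by rw [div_le_one hlam0]; exact hlamL
  have hq1 : ∀ t, q t ≤ 1 := fun t => le_trans (hstep t).2 hL2lam
  refine ⟨fun t => ⟨(hstep t).2, hL2lam⟩, ?_⟩
  set g : ℕ → ℝ := fun t => Real.log ((W t).det) with hg
  have hWsucc : ∀ t, W (t+1) = W t + Matrix.vecMulVec (x (t+1) : Fin d → ℝ) (x (t+1)) := by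
    intro t
    rw [hW (t+1), hW t, Finset.sum_Icc_succ_top (Nat.succ_le_succ (Nat.zero_le t)), add_assoc]
  have hdet : ∀ t, (W (t+1)).det = (W t).det * (1 + q t) := by
    intro t; rw [hWsucc t]; exact aux_det_lemma (hpd t) _
  have hlog : ∀ t, q t ≤ 2 * (g (t+1) - g t) := by
    intro t
    have h1q : (0:ℝ) < 1 + q t := by linarith [(hstep t).1]
    have hgt : g (t+1) = g t + Real.log (1 + q t) := by
      show Real.log ((W (t+1)).det) = Real.log ((W t).det) + Real.log (1 + q t)
      rw [hdet t, Real.log_mul (hpd t).det_pos.ne' h1q.ne']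
    rw [hgt]
    have := aux_le_two_log (hstep t).1 (hq1 t)
    linarith
  have hsum : ∑ t ∈ Finset.range T, q t ≤ 2 * (g T - g 0) := by
    calc ∑ t ∈ Finset.range T, q t ≤ ∑ t ∈ Finset.range T, 2 * (g (t+1) - g t) :=
          Finset.sum_le_sum fun t _ => hlog t
      _ = 2 * ∑ t ∈ Finset.range T, (g (t+1) - g t) := by rw [Finset.mul_sum]
      _ = 2 * (g T - g 0) := by rw [Finset.sum_range_sub g]
  have hg0 : g 0 = d * Real.log lam := by
    show Real.log ((W 0).det) = d * Real.log lam
    rw [hW 0]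
    have : Finset.Icc 1 0 = (∅ : Finset ℕ) := by simp
    rw [this, Finset.sum_empty, add_zero, Matrix.det_smul, Matrix.det_one, mul_one]
    simp [Real.log_pow]
  -- trace bound
  have htr_eq : (W T).trace = lam * d + ∑ τ ∈ Finset.Icc 1 T, ((x τ : Fin d → ℝ) ⬝ᵥ (x τ)) := by
    rw [hW T, Matrix.trace_add, Matrix.trace_smul, Matrix.trace_one, Matrix.trace_sum]
    simp only [smul_eq_mul, Fintype.card_fin]
    congr 1
  have hsum_dot_nonneg : (0:ℝ) ≤ ∑ τ ∈ Finset.Icc 1 T, ((x τ : Fin d → ℝ) ⬝ᵥ (x τ)) :=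
    Finset.sum_nonneg fun τ _ => Finset.sum_nonneg fun i _ => mul_self_nonneg _
  have htr_le : (W T).trace ≤ lam * d + T * L ^ 2 := by
    rw [htr_eq]
    have : ∑ τ ∈ Finset.Icc 1 T, ((x τ : Fin d → ℝ) ⬝ᵥ (x τ)) ≤ ∑ τ ∈ Finset.Icc 1 T, L ^ 2 :=
      Finset.sum_le_sum fun τ _ => hdot τ
    rw [Finset.sum_const, Nat.card_Icc] at this
    simp only [Nat.add_sub_cancel, nsmul_eq_mul] at this
    linarith
  have htr_pos : (0:ℝ) < (W T).trace := by
    rw [htr_eq]; nlinarith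
  have hu0 : (0:ℝ) ≤ T * L ^ 2 / (d * lam) := by positivity
  have hgT : g T ≤ d * Real.log (lam + T * L ^ 2 / d) := by
    show Real.log ((W T).det) ≤ _
    have h1 : (W T).det ≤ ((W T).trace / d) ^ d := aux_det_le_trace_pow hd (hpd T).posSemidef
    have h2 : Real.log ((W T).det) ≤ Real.log (((W T).trace / d) ^ d) :=
      Real.log_le_log (hpd T).det_pos h1
    rw [Real.log_pow] at h2
    refine le_trans h2 ?_
    have h3 : (W T).trace / d ≤ lam + T * L ^ 2 / d := by
      rw [div_le_iff₀ hdR]; rw [add_mul]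
      calc (W T).trace ≤ lam * d + T * L ^ 2 := htr_le
        _ = lam * d + T * L ^ 2 / d * d := by field_simp
    have h4 : (0:ℝ) < (W T).trace / d := div_pos htr_pos hdR
    have := Real.log_le_log h4 h3
    nlinarith [this, hdR]
  have hfac : lam + T * L ^ 2 / d = lam * (1 + T * L ^ 2 / (d * lam)) := by
    field_simp
  have hgT' : g T ≤ d * Real.log lam + d * Real.log (1 + T * L ^ 2 / (d * lam)) := by
    rw [hfac, Real.log_mul hlam0.ne' (by linarith : (1:ℝ) + T * L ^ 2 / (d * lam) ≠ 0)] at hgT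
    · nlinarith [hgT, hdR]
  calc ∑ t ∈ Finset.range T, q t ≤ 2 * (g T - g 0) := hsum
    _ ≤ 2 * (d * Real.log (1 + T * L ^ 2 / (d * lam))) := by linarith [hgT', hg0.le, hg0.ge]
    _ = 2 * d * Real.log (1 + T * L ^ 2 / (d * lam)) := by ring
end
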